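/- In the Clifford Hayden–Preskill recovery protocol with generalized Bell measurement and Pauli feedback, when measurement outcome |EPR⟩_{D\overline{D}} occurs (probability N_{I_D}/d_A^2), the normalized post-measurement state on R\overline{R} is ρ_{R\overline{R}} = (1/N_{I_D}) ∑_{P_R : Λ_D(P_R)=I_D} |P_R⟩⟨P_R|, where |P_R⟩ = (P_R ⊗ I)|EPR⟩_{R\overline{R}}. In particular, if N_{I_D} = 1 the output is exactly |EPR⟩_{R\overline{R}}. -/

import Mathlib

open Matrix Kronecker BigOperators

/-- The `n`-qubit Pauli operator `X^x Z^z` (symplectic representation). -/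
noncomputable def pauli {n : ℕ} (x z : Fin n → ZMod 2) :
    Matrix (Fin n → ZMod 2) (Fin n → ZMod 2) ℂ :=
  fun j k => if j = k + x then ((-1 : ℂ)) ^ (∑ i, (z i * k i).val) else 0

/-- The Yoshida–Kitaev doubled Hayden–Preskill state, registers
`(R,(C,D),(D̄,C̄),R̄)`. -/
noncomputable def psiYK (nA nB nC nD : ℕ)
    (U : Matrix ((Fin nC → ZMod 2) × (Fin nD → ZMod 2))
      ((Fin nA → ZMod 2) × (Fin nB → ZMod 2)) ℂ)
    (r : Fin nA → ZMod 2) (cd : (Fin nC → ZMod 2) × (Fin nD → ZMod 2))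
    (dc : (Fin nD → ZMod 2) × (Fin nC → ZMod 2)) (rb : Fin nA → ZMod 2) : ℂ :=
  ((2 ^ nA : ℂ) * (Real.sqrt (2 ^ nB) : ℂ))⁻¹ *
    ∑ b : Fin nB → ZMod 2,
      U cd (r, b) * (starRingEnd ℂ) (U (dc.2, dc.1) (rb, b))

/-- Unnormalized state after projecting `DD̄` onto `|EPR⟩_{DD̄}`. -/
noncomputable def phiEPR (nA nB nC nD : ℕ)
    (U : Matrix ((Fin nC → ZMod 2) × (Fin nD → ZMod 2))
      ((Fin nA → ZMod 2) × (Fin nB → ZMod 2)) ℂ)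
    (r : Fin nA → ZMod 2) (cc cb : Fin nC → ZMod 2) (rb : Fin nA → ZMod 2) : ℂ :=
  ∑ d : Fin nD → ZMod 2,
    ((Real.sqrt (2 ^ nD) : ℂ))⁻¹ * psiYK nA nB nC nD U r (cc, d) (d, cb) rb

/-!
Up to normalization, the amplitude `φ(r, k, k', r')` of the projected state is the `(k, k')` entry
of `Tr_D U (|r⟩⟨r'| ⊗ 1_B) U†`. Expand the matrix unit `|r⟩⟨r'|` in the Pauli basis of `A`: by the
Clifford property each Pauli `P` contributes `c_P P_C · Tr P_D`, which vanishes unless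
`Λ_D(P) = I_D`. The surviving operators `c_P P_C` are Hilbert–Schmidt orthogonal because `U` is an
isometry and the Paulis on `A` are orthogonal, so
`∑_{k,k'} φ(p) φ(q)* = d_A⁻³ ∑_{P ∈ ker Λ_D} P(p) P(q)`; the probability and the state follow.
If `N = 1` then `ker Λ_D = {I}`, since `U U† = 1` forces `Λ_D(I) = I_D`.
-/

abbrev Bits (n : ℕ) := Fin n → ZMod 2

lemma Bits.add_eq_zero_iff {n : ℕ} {x y : Bits n} : x + y = 0 ↔ x = y := by
  rw [add_eq_zero_iff_eq_neg, show -y = y from funext fun i => ZMod.neg_eq_self_mod_two (y i)]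

lemma trace_mul_conjTranspose {m n R : Type*} [Fintype m] [Fintype n] [NonUnitalSemiring R]
    [StarRing R] (A B : Matrix m n R) :
    (A * Bᴴ).trace = ∑ i, ∑ j, A i j * star (B i j) := by
  simp [Matrix.trace, Matrix.mul_apply]

lemma trace_sum_smul_mul_conjTranspose {ι κ m n : Type*} [Fintype m] [Fintype n]
    (s : Finset ι) (t : Finset κ) (a : ι → ℂ) (b : κ → ℂ) (M : ι → Matrix m n ℂ)
    (N : κ → Matrix m n ℂ) :
    ((∑ i ∈ s, a i • M i) * (∑ j ∈ t, b j • N j)ᴴ).trace =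
      ∑ i ∈ s, ∑ j ∈ t, a i * star (b j) * (M i * (N j)ᴴ).trace := by
  rw [conjTranspose_sum, Matrix.sum_mul]
  simp only [Matrix.mul_sum, conjTranspose_smul, Matrix.smul_mul, Matrix.mul_smul, trace_sum,
    trace_smul, smul_eq_mul, mul_assoc, mul_left_comm (star _)]

section Pauli

variable {n : ℕ}

lemma neg_one_pow_val_add (a b : ZMod 2) :
    (-1 : ℂ) ^ (a + b).val = (-1) ^ a.val * (-1) ^ b.val := by
  rw [ZMod.val_add, ← neg_one_pow_eq_pow_mod_two, pow_add]

noncomputable def chi (w k : Bits n) : ℂ :=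
  (-1) ^ ∑ i, (w i * k i).val

lemma chi_eq_prod (w k : Bits n) : chi w k = ∏ i, (-1 : ℂ) ^ (w i * k i).val :=
  (Finset.prod_pow_eq_pow_sum _ _ _).symm

lemma chi_comm (w k : Bits n) : chi w k = chi k w := by
  simp only [chi, mul_comm (w _)]

lemma chi_add_right (w k k' : Bits n) : chi w (k + k') = chi w k * chi w k' := by
  simp only [chi_eq_prod, ← Finset.prod_mul_distrib, Pi.add_apply, mul_add, neg_one_pow_val_add]

lemma chi_add_left (w w' k : Bits n) : chi (w + w') k = chi w k * chi w' k := by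
  simp only [chi_comm _ k, chi_add_right]

lemma star_chi (w k : Bits n) : star (chi w k) = chi w k := by
  simp [chi]

lemma sum_chi (w : Bits n) : ∑ k, chi w k = if w = 0 then 2 ^ n else 0 := by
  have h_coord (a : ZMod 2) :
      ∑ b : ZMod 2, (-1 : ℂ) ^ (a * b).val = if a = 0 then 2 else 0 := by
    obtain rfl | rfl : a = 0 ∨ a = 1 := by revert a; decide
    all_goals simp [show (Finset.univ : Finset (ZMod 2)) = {0, 1} from rfl, ZMod.val_one]
  simp only [chi_eq_prod]
  rw [← Fintype.prod_sum (fun i b => (-1 : ℂ) ^ (w i * b).val)]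
  simp only [h_coord, Finset.prod_ite_zero, Finset.mem_univ, true_implies, Finset.prod_const,
    Finset.card_univ, Fintype.card_fin, funext_iff, Pi.zero_apply]

lemma pauli_apply (x z j k : Bits n) :
    pauli x z j k = if j = k + x then chi z k else 0 := rfl

lemma star_pauli_apply (x z j k : Bits n) : star (pauli x z j k) = pauli x z j k := by
  rw [pauli_apply]
  split_ifs <;> simp [star_chi]

lemma pauli_zero_zero : pauli (0 : Bits n) 0 = 1 := by
  ext j k
  simp [pauli_apply, chi, one_apply]

lemma trace_pauli (x z : Bits n) :
    (pauli x z).trace = if x = 0 ∧ z = 0 then 2 ^ n else 0 := by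
  by_cases hx : x = 0
  · simp [trace, pauli_apply, hx, sum_chi]
  · have h_offdiag (k : Bits n) : ¬ k = k + x := fun h => hx (by simpa using h)
    simp [trace, pauli_apply, h_offdiag, hx]

lemma trace_pauli_mul_conjTranspose (x z x' z' : Bits n) :
    (pauli x z * (pauli x' z')ᴴ).trace = if x = x' ∧ z = z' then 2 ^ n else 0 := by
  rw [trace_mul_conjTranspose, Finset.sum_comm]
  simp only [star_pauli_apply]
  simp only [pauli_apply, ite_mul, zero_mul, mul_ite, mul_zero, Finset.sum_ite_eq',
    Finset.mem_univ, if_true, add_right_inj, ← chi_add_left]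
  by_cases hx : x = x'
  · simp [hx, sum_chi, Bits.add_eq_zero_iff]
  · simp [hx, Ne.symm hx]

lemma sum_pauli_apply_mul_self (x z : Bits n) :
    ∑ j, ∑ k, pauli x z j k * pauli x z j k = 2 ^ n := by
  simpa only [trace_mul_conjTranspose, star_pauli_apply, and_self, if_true] using
    trace_pauli_mul_conjTranspose x z x z

lemma sum_pauli_mul_pauli (r r' j k : Bits n) :
    ∑ P : Bits n × Bits n, pauli P.1 P.2 r r' * pauli P.1 P.2 j k =
      if j = r ∧ k = r' then 2 ^ n else 0 := by
  have h_sum_z (x : Bits n) : ∑ z, pauli x z r r' * pauli x z j k =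
      if r = r' + x ∧ j = k + x then (if k = r' then 2 ^ n else 0) else 0 := by
    have hchi (z : Bits n) : chi z r' * chi z k = chi (r' + k) z := by
      rw [chi_comm (r' + k), chi_add_right]
    simp only [pauli_apply, ite_zero_mul_ite_zero, hchi]
    split_ifs <;> simp_all [sum_chi, Bits.add_eq_zero_iff, eq_comm]
  rw [Fintype.sum_prod_type]
  simp only [h_sum_z]
  by_cases hk : k = r'
  · subst hk
    by_cases hj : j = r
    · simp [hj, eq_comm (a := r), ← eq_sub_iff_add_eq']
    · refine (Finset.sum_eq_zero fun x _ => if_neg ?_).trans (if_neg (by tauto)).symm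
      rintro ⟨rfl, h⟩
      exact hj h
  · simp [hk]

lemma single_eq_sum_pauli (r r' : Bits n) :
    single r r' (1 : ℂ) =
      (2 ^ n : ℂ)⁻¹ • ∑ P : Bits n × Bits n, pauli P.1 P.2 r r' • pauli P.1 P.2 := by
  ext j k
  simp only [Matrix.smul_apply, Matrix.sum_apply, smul_eq_mul, sum_pauli_mul_pauli, single_apply]
  split_ifs <;> simp_all

end Pauli

section ReducedConjugation

variable {α β γ δ R : Type*} [Fintype δ] [CommSemiring R]

def partialTraceRight : Matrix (γ × δ) (γ × δ) R →ₗ[R] Matrix γ γ R where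
  toFun M i j := ∑ d, M (i, d) (j, d)
  map_add' M N := by ext i j; exact Finset.sum_add_distrib
  map_smul' c M := by ext i j; exact (Finset.mul_sum _ _ _).symm

lemma partialTraceRight_apply (M : Matrix (γ × δ) (γ × δ) R) (i j : γ) :
    partialTraceRight M i j = ∑ d, M (i, d) (j, d) := rfl

lemma partialTraceRight_kronecker (A : Matrix γ γ R) (B : Matrix δ δ R) :
    partialTraceRight (A ⊗ₖ B) = B.trace • A := by
  ext i j
  simp [partialTraceRight_apply, trace, Finset.mul_sum, mul_comm]

variable [StarRing R] [Fintype α] [Fintype β] [DecidableEq β]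

def reducedConj (U : Matrix (γ × δ) (α × β) R) : Matrix α α R →ₗ[R] Matrix γ γ R where
  toFun X := partialTraceRight (U * (X ⊗ₖ (1 : Matrix β β R)) * Uᴴ)
  map_add' X Y := by simp [add_kronecker, Matrix.mul_add, Matrix.add_mul]
  map_smul' c X := by simp [smul_kronecker]

lemma reducedConj_apply (U : Matrix (γ × δ) (α × β) R) (X : Matrix α α R) :
    reducedConj U X = partialTraceRight (U * (X ⊗ₖ (1 : Matrix β β R)) * Uᴴ) := rfl

lemma reducedConj_single_apply [DecidableEq α] (U : Matrix (γ × δ) (α × β) R) (r r' : α)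
    (i j : γ) :
    reducedConj U (single r r' 1) i j =
      ∑ d, ∑ b, U (i, d) (r, b) * star (U (j, d) (r', b)) := by
  simp [reducedConj_apply, partialTraceRight_apply, mul_apply, Fintype.sum_prod_type,
    single_apply, one_apply, ite_and, Finset.sum_ite_irrel]

lemma reducedConj_eq_of_conj_eq {U : Matrix (γ × δ) (α × β) R} {X : Matrix α α R}
    {C : Matrix γ γ R} {D : Matrix δ δ R}
    (h : U * (X ⊗ₖ (1 : Matrix β β R)) * Uᴴ = C ⊗ₖ D) :
    reducedConj U X = D.trace • C := by
  rw [reducedConj_apply, h, partialTraceRight_kronecker]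

lemma kronecker_one_mul_conjTranspose (A B : Matrix α α R) :
    (A ⊗ₖ (1 : Matrix β β R)) * (B ⊗ₖ (1 : Matrix β β R))ᴴ =
      (A * Bᴴ) ⊗ₖ (1 : Matrix β β R) := by
  rw [conjTranspose_kronecker, conjTranspose_one, ← mul_kronecker_mul, Matrix.one_mul]

variable [Fintype γ] [DecidableEq α] [DecidableEq δ] {U : Matrix (γ × δ) (α × β) R}
  {A A' : Matrix α α R} {C C' : Matrix γ γ R}

lemma trace_mul_conjTranspose_of_conj_eq (hU : Uᴴ * U = 1)
    (h : U * (A ⊗ₖ (1 : Matrix β β R)) * Uᴴ = C ⊗ₖ (1 : Matrix δ δ R))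
    (h' : U * (A' ⊗ₖ (1 : Matrix β β R)) * Uᴴ = C' ⊗ₖ (1 : Matrix δ δ R)) :
    Fintype.card δ * (C * C'ᴴ).trace = Fintype.card β * (A * A'ᴴ).trace := by
  have h_conj : (C * C'ᴴ) ⊗ₖ (1 : Matrix δ δ R) =
      U * ((A * A'ᴴ) ⊗ₖ (1 : Matrix β β R)) * Uᴴ := by
    rw [← kronecker_one_mul_conjTranspose, ← h, ← h', ← kronecker_one_mul_conjTranspose]
    simp only [conjTranspose_mul, conjTranspose_conjTranspose, Matrix.mul_assoc]
    rw [← Matrix.mul_assoc Uᴴ U, hU, Matrix.one_mul]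
  have h_trace := congrArg trace h_conj
  rw [trace_kronecker, trace_one, trace_mul_cycle, hU, Matrix.one_mul, trace_kronecker,
    trace_one] at h_trace
  simpa [mul_comm] using h_trace

lemma trace_reducedConj_mul_conjTranspose (hU : Uᴴ * U = 1)
    (h : U * (A ⊗ₖ (1 : Matrix β β R)) * Uᴴ = C ⊗ₖ (1 : Matrix δ δ R))
    (h' : U * (A' ⊗ₖ (1 : Matrix β β R)) * Uᴴ = C' ⊗ₖ (1 : Matrix δ δ R)) :
    (reducedConj U A * (reducedConj U A')ᴴ).trace =
      Fintype.card δ * Fintype.card β * (A * A'ᴴ).trace := by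
  rw [reducedConj_eq_of_conj_eq h, reducedConj_eq_of_conj_eq h', trace_one, conjTranspose_smul,
    Matrix.smul_mul, Matrix.mul_smul, trace_smul, trace_smul, smul_eq_mul, smul_eq_mul,
    star_natCast, trace_mul_conjTranspose_of_conj_eq hU h h', mul_assoc]

end ReducedConjugation

lemma reducedConj_single_eq_sum_pauli {n : ℕ} {β γ δ : Type*} [Fintype β] [DecidableEq β]
    [Fintype δ] (U : Matrix (γ × δ) (Bits n × β) ℂ) (r r' : Bits n) :
    reducedConj U (single r r' 1) = ∑ P : Bits n × Bits n,
      ((2 ^ n : ℂ)⁻¹ * pauli P.1 P.2 r r') • reducedConj U (pauli P.1 P.2) := by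
  simp only [single_eq_sum_pauli, map_smul, map_sum, Finset.smul_sum, smul_smul]

section HaydenPreskill

variable {nA nB nC nD : ℕ}

def IsCliffordAction (U : Matrix (Bits nC × Bits nD) (Bits nA × Bits nB) ℂ)
    (c : Bits nA → Bits nA → ℂ) (xc zc : Bits nA → Bits nA → Bits nC)
    (xd zd : Bits nA → Bits nA → Bits nD) : Prop :=
  ∀ x z, U * (pauli x z ⊗ₖ (1 : Matrix (Bits nB) (Bits nB) ℂ)) * Uᴴ =
    c x z • (pauli (xc x z) (zc x z) ⊗ₖ pauli (xd x z) (zd x z))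

/-- `ker Λ_D`, whose cardinality is `N_{I_D}`. -/
def kerLambdaD (xd zd : Bits nA → Bits nA → Bits nD) : Finset (Bits nA × Bits nA) :=
  Finset.univ.filter fun P => xd P.1 P.2 = 0 ∧ zd P.1 P.2 = 0

lemma mem_kerLambdaD {xd zd : Bits nA → Bits nA → Bits nD} {P : Bits nA × Bits nA} :
    P ∈ kerLambdaD xd zd ↔ xd P.1 P.2 = 0 ∧ zd P.1 P.2 = 0 := by
  simp [kerLambdaD]

variable {U : Matrix (Bits nC × Bits nD) (Bits nA × Bits nB) ℂ} {c : Bits nA → Bits nA → ℂ}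
  {xc zc : Bits nA → Bits nA → Bits nC} {xd zd : Bits nA → Bits nA → Bits nD}

lemma conj_pauli_of_mem_kerLambdaD (hU : IsCliffordAction U c xc zc xd zd)
    {P : Bits nA × Bits nA} (hP : P ∈ kerLambdaD xd zd) :
    U * (pauli P.1 P.2 ⊗ₖ (1 : Matrix (Bits nB) (Bits nB) ℂ)) * Uᴴ =
      (c P.1 P.2 • pauli (xc P.1 P.2) (zc P.1 P.2)) ⊗ₖ
        (1 : Matrix (Bits nD) (Bits nD) ℂ) := by
  obtain ⟨hx, hz⟩ := mem_kerLambdaD.mp hP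
  rw [hU, hx, hz, pauli_zero_zero, smul_kronecker]

lemma reducedConj_pauli_of_not_mem_kerLambdaD (hU : IsCliffordAction U c xc zc xd zd)
    {P : Bits nA × Bits nA} (hP : P ∉ kerLambdaD xd zd) :
    reducedConj U (pauli P.1 P.2) = 0 := by
  rw [reducedConj_eq_of_conj_eq (by rw [hU, ← smul_kronecker]), trace_pauli,
    if_neg (mt mem_kerLambdaD.mpr hP), zero_smul]

lemma zero_mem_kerLambdaD (hU₁ : U * Uᴴ = 1) (hU : IsCliffordAction U c xc zc xd zd) :
    (0, 0) ∈ kerLambdaD xd zd := by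
  have h := congrArg trace (hU 0 0)
  rw [pauli_zero_zero, one_kronecker_one, Matrix.mul_one, hU₁, trace_one, trace_smul,
    trace_kronecker] at h
  by_contra hP
  rw [trace_pauli (xd 0 0), if_neg (mt mem_kerLambdaD.mpr hP)] at h
  simp at h

lemma trace_reducedConj_pauli_mul_conjTranspose (hU₂ : Uᴴ * U = 1)
    (hU : IsCliffordAction U c xc zc xd zd) (P Q : Bits nA × Bits nA) :
    (reducedConj U (pauli P.1 P.2) * (reducedConj U (pauli Q.1 Q.2))ᴴ).trace =
      if P ∈ kerLambdaD xd zd ∧ P = Q then 2 ^ nD * 2 ^ nB * 2 ^ nA else 0 := by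
  by_cases hP : P ∈ kerLambdaD xd zd
  · by_cases hQ : Q ∈ kerLambdaD xd zd
    · rw [trace_reducedConj_mul_conjTranspose hU₂ (conj_pauli_of_mem_kerLambdaD hU hP)
        (conj_pauli_of_mem_kerLambdaD hU hQ), trace_pauli_mul_conjTranspose]
      simp [hP, Prod.ext_iff]
    · rw [reducedConj_pauli_of_not_mem_kerLambdaD hU hQ, conjTranspose_zero, Matrix.mul_zero,
        trace_zero, if_neg (by rintro ⟨-, rfl⟩; exact hQ hP)]
  · rw [reducedConj_pauli_of_not_mem_kerLambdaD hU hP, Matrix.zero_mul, trace_zero,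
      if_neg (by tauto)]

lemma trace_reducedConj_single_mul_conjTranspose (hU₂ : Uᴴ * U = 1)
    (hU : IsCliffordAction U c xc zc xd zd) (p q : Bits nA × Bits nA) :
    (reducedConj U (single p.1 p.2 1) * (reducedConj U (single q.1 q.2 1))ᴴ).trace =
      2 ^ nD * 2 ^ nB / 2 ^ nA *
        ∑ P ∈ kerLambdaD xd zd, pauli P.1 P.2 p.1 p.2 * pauli P.1 P.2 q.1 q.2 := by
  rw [reducedConj_single_eq_sum_pauli, reducedConj_single_eq_sum_pauli,
    trace_sum_smul_mul_conjTranspose]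
  simp only [trace_reducedConj_pauli_mul_conjTranspose hU₂ hU, ite_and, mul_ite, mul_zero,
    Finset.sum_ite_irrel, Finset.sum_const_zero, Finset.sum_ite_eq, Finset.mem_univ, if_true,
    Finset.sum_ite_mem, Finset.univ_inter, Finset.mul_sum]
  refine Finset.sum_congr rfl fun P _ => ?_
  simp only [star_mul', star_inv₀, star_pow, star_ofNat, star_pauli_apply]
  field_simp

lemma phiEPR_eq_reducedConj_single (r rb : Bits nA) (cc cb : Bits nC) :
    phiEPR nA nB nC nD U r cc cb rb =
      ((2 ^ nA : ℂ) * Real.sqrt (2 ^ nB) * Real.sqrt (2 ^ nD))⁻¹ *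
        reducedConj U (single r rb 1) cc cb := by
  rw [reducedConj_single_apply, phiEPR]
  simp only [psiYK, Finset.mul_sum, mul_inv, starRingEnd_apply]
  exact Finset.sum_congr rfl fun d _ => Finset.sum_congr rfl fun b _ => by ring

lemma sum_phiEPR_mul_conj (hU₂ : Uᴴ * U = 1) (hU : IsCliffordAction U c xc zc xd zd)
    (p q : Bits nA × Bits nA) :
    ∑ cc, ∑ cb, phiEPR nA nB nC nD U p.1 cc cb p.2 *
        starRingEnd ℂ (phiEPR nA nB nC nD U q.1 cc cb q.2) =
      ((2 ^ nA : ℂ) ^ 3)⁻¹ *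
        ∑ P ∈ kerLambdaD xd zd, pauli P.1 P.2 p.1 p.2 * pauli P.1 P.2 q.1 q.2 := by
  set K : ℂ := ((2 ^ nA : ℂ) * Real.sqrt (2 ^ nB) * Real.sqrt (2 ^ nD))⁻¹ with hK_def
  have hK : starRingEnd ℂ K = K := by simp [K, Complex.conj_ofReal, map_ofNat]
  calc _ = K * K *
        (reducedConj U (single p.1 p.2 1) * (reducedConj U (single q.1 q.2 1))ᴴ).trace := by
        simp only [phiEPR_eq_reducedConj_single, ← hK_def, trace_mul_conjTranspose, map_mul, hK,
          Finset.mul_sum, starRingEnd_apply]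
        exact Finset.sum_congr rfl fun _ _ => Finset.sum_congr rfl fun _ _ => by ring
    _ = _ := by
        rw [trace_reducedConj_single_mul_conjTranspose hU₂ hU, ← mul_assoc, hK_def]
        congr 1
        field_simp
        rw [← Complex.ofReal_pow, ← Complex.ofReal_pow, Real.sq_sqrt (by positivity),
          Real.sq_sqrt (by positivity)]
        push_cast
        ring

lemma sum_normSq_phiEPR (hU₂ : Uᴴ * U = 1) (hU : IsCliffordAction U c xc zc xd zd) :
    ∑ r, ∑ cc, ∑ cb, ∑ rb, Complex.normSq (phiEPR nA nB nC nD U r cc cb rb) =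
      (kerLambdaD xd zd).card / ((2 : ℝ) ^ nA) ^ 2 := by
  apply Complex.ofReal_injective
  simp only [Complex.ofReal_sum, ← Complex.mul_conj]
  have h_sum_r (r : Bits nA) :
      ∑ cc, ∑ cb, ∑ rb, phiEPR nA nB nC nD U r cc cb rb *
          starRingEnd ℂ (phiEPR nA nB nC nD U r cc cb rb) =
        ∑ rb, ((2 ^ nA : ℂ) ^ 3)⁻¹ *
          ∑ P ∈ kerLambdaD xd zd, pauli P.1 P.2 r rb * pauli P.1 P.2 r rb := by
    rw [Finset.sum_congr rfl fun _ _ => Finset.sum_comm, Finset.sum_comm]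
    exact Finset.sum_congr rfl fun rb _ => sum_phiEPR_mul_conj hU₂ hU (r, rb) (r, rb)
  simp only [h_sum_r, ← Finset.mul_sum]
  rw [Finset.sum_congr rfl fun _ _ => Finset.sum_comm, Finset.sum_comm]
  simp only [sum_pauli_apply_mul_self, Finset.sum_const, nsmul_eq_mul]
  push_cast
  field_simp

end HaydenPreskill

/-- When the generalized Bell measurement yields `|EPR⟩_{DD̄}` (probability
`N_{I_D}/d_A²`), the normalized post-measurement state on `RR̄` is
`ρ_{RR̄} = (1/N_{I_D}) ∑_{P_R : Λ_D(P_R) = I_D} |P_R⟩⟨P_R|`; in particular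
for `N_{I_D} = 1` the output is exactly `|EPR⟩⟨EPR|_{RR̄}`. -/
theorem stmt11 (nA nB nC nD : ℕ)
    (U : Matrix ((Fin nC → ZMod 2) × (Fin nD → ZMod 2))
      ((Fin nA → ZMod 2) × (Fin nB → ZMod 2)) ℂ)
    (hU1 : U * Uᴴ = 1) (hU2 : Uᴴ * U = 1)
    (c : (Fin nA → ZMod 2) → (Fin nA → ZMod 2) → ℂ)
    (xc zc : (Fin nA → ZMod 2) → (Fin nA → ZMod 2) → (Fin nC → ZMod 2))
    (xd zd : (Fin nA → ZMod 2) → (Fin nA → ZMod 2) → (Fin nD → ZMod 2))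
    (hClif : ∀ x z : Fin nA → ZMod 2, ‖c x z‖ = 1 ∧
      U * (pauli x z ⊗ₖ (1 : Matrix (Fin nB → ZMod 2) (Fin nB → ZMod 2) ℂ)) * Uᴴ
        = c x z • (pauli (xc x z) (zc x z) ⊗ₖ pauli (xd x z) (zd x z)))
    (N : ℕ)
    (hN : N = Fintype.card {PA : (Fin nA → ZMod 2) × (Fin nA → ZMod 2) //
        xd PA.1 PA.2 = 0 ∧ zd PA.1 PA.2 = 0})
    (ρ : Matrix ((Fin nA → ZMod 2) × (Fin nA → ZMod 2))
      ((Fin nA → ZMod 2) × (Fin nA → ZMod 2)) ℂ)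
    (hρ : ρ = fun p q => ((2 ^ nA : ℂ) ^ 2 / N) *
      ∑ cc : Fin nC → ZMod 2, ∑ cb : Fin nC → ZMod 2,
        phiEPR nA nB nC nD U p.1 cc cb p.2 *
          (starRingEnd ℂ) (phiEPR nA nB nC nD U q.1 cc cb q.2)) :
    -- probability of the |EPR⟩_{DD̄} outcome
    (∑ r : Fin nA → ZMod 2, ∑ cc : Fin nC → ZMod 2,
        ∑ cb : Fin nC → ZMod 2, ∑ rb : Fin nA → ZMod 2,
          Complex.normSq (phiEPR nA nB nC nD U r cc cb rb))
        = (N : ℝ) / (2 ^ nA) ^ 2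
    -- the normalized post-measurement state on R R̄
    ∧ ρ = ((N : ℂ))⁻¹ •
        ∑ PR : {PA : (Fin nA → ZMod 2) × (Fin nA → ZMod 2) //
            xd PA.1 PA.2 = 0 ∧ zd PA.1 PA.2 = 0},
          (fun p q => ((2 ^ nA : ℂ))⁻¹ * pauli (PR.1.1) (PR.1.2) p.1 p.2 *
            (starRingEnd ℂ) (pauli (PR.1.1) (PR.1.2) q.1 q.2) :
            Matrix ((Fin nA → ZMod 2) × (Fin nA → ZMod 2))
              ((Fin nA → ZMod 2) × (Fin nA → ZMod 2)) ℂ)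
    -- perfect case
    ∧ (N = 1 → ρ = fun p q => ((2 ^ nA : ℂ))⁻¹ *
        (if p.1 = p.2 then 1 else 0) * (if q.1 = q.2 then 1 else 0)) := by
  have hU : IsCliffordAction U c xc zc xd zd := fun x z => (hClif x z).2
  have hcard : N = (kerLambdaD xd zd).card := by rw [hN, Fintype.card_subtype]; rfl
  have hρ_apply (p q) : ρ p q = (N : ℂ)⁻¹ * ∑ P ∈ kerLambdaD xd zd,
      (2 ^ nA : ℂ)⁻¹ * pauli P.1 P.2 p.1 p.2 * pauli P.1 P.2 q.1 q.2 := by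
    simp only [hρ, sum_phiEPR_mul_conj hU2 hU p q, mul_assoc, ← Finset.mul_sum]
    field_simp
  refine ⟨hcard ▸ sum_normSq_phiEPR hU2 hU, ?_, fun hN₁ => ?_⟩
  · ext p q
    rw [hρ_apply, Pi.smul_apply, Pi.smul_apply, Finset.sum_apply, Finset.sum_apply,
      Finset.sum_subtype (F := inferInstance) _ fun _ => mem_kerLambdaD]
    simp only [starRingEnd_apply, star_pauli_apply, smul_eq_mul]
  · obtain ⟨P₀, hP₀⟩ := Finset.card_eq_one.mp (hcard ▸ hN₁)
    have hker : kerLambdaD xd zd = {(0, 0)} := by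
      simpa [hP₀, eq_comm] using zero_mem_kerLambdaD hU1 hU
    ext p q
    rw [hρ_apply, hker, hN₁]
    simp [pauli_zero_zero, one_apply]
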